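/- Let m ≥ 3 and let c be a WOMNI weight tensor that induces flat correlation. Then min_{q ∈ {1,…,m}} α(q,q) ≥ (m−8)/2 and max_{q ∈ {1,…,m}} α(q,q) ≤ (m+10)/2. -/

import Mathlib

/-!
Write `a q = α(q,q)`. For `i ≠ j` the terms `q = i, j` of `S(i,j)` are `(a i - x)² + (1 - x - a j)²`
with `x = c(i,i,j) ∈ [0,1]`, and each of the other `m - 2` terms lies in `[0,1]`. Hence
`S(i,j) ≥ (a i - 1)² + (a j)² - 1/2` if `a j ≤ a i`, and `S(i,j) ≤ (a i - 1)² + (a j)² + m - 2`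
if `a i ≤ a j`. Let `M = a s` and `L = a t` be the extreme values; as `∑ q, a q = m(m+1)/2`, some
`v ≠ t` has `a v ≤ (m+2)/2` and some `u ≠ s` has `(m-1) a u ≥ m(m+1)/2 - M`. Comparing `S` through
`s` with `S(t,v)` cancels `L²` and gives `(M-1)² ≤ (a v)² + m - 5/2`, i.e. the bound on `M`;
then `a u ≥ m/2` for `m ≥ 11`, and comparing `S(s,u)` with `S` through `t` gives
`(a u)² ≤ (L-1)² + 2M + m - 5/2`, the bound on `L`.
-/

open Finset

/-- Cumulative weight `α(k,q) = ∑_ℓ c(q,k,ℓ)`. -/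
noncomputable def alphaW (m : ℕ) (c : Fin m → Fin m → Fin m → ℝ) (k q : Fin m) : ℝ :=
  ∑ ℓ, c q k ℓ

/-- `β_q(s1,s2) = α(s1,q) − α(s2,q)`. -/
noncomputable def betaW (m : ℕ) (c : Fin m → Fin m → Fin m → ℝ) (q s1 s2 : Fin m) : ℝ :=
  alphaW m c s1 q - alphaW m c s2 q

/-- WOMNI (weighted Omnibus) weight tensor. -/
def IsWOMNI (m : ℕ) (c : Fin m → Fin m → Fin m → ℝ) : Prop :=
  (∀ q i j, c q i j = c q j i) ∧
  (∀ q i j, q ≠ i → q ≠ j → c q i j = 0) ∧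
  (∀ i, c i i i = 1) ∧
  (∀ q i, q ≠ i → c q i i = 0) ∧
  (∀ i j, i ≠ j → c i i j ∈ Set.Icc (0:ℝ) 1 ∧ c i i j + c j i j = 1)

/-- The tensor induces flat correlation: `S(s1,s2) = ∑_q β_q(s1,s2)²` is the same
for all pairs `s1 ≠ s2`. -/
def InducesFlat (m : ℕ) (c : Fin m → Fin m → Fin m → ℝ) : Prop :=
  ∀ s1 s2 t1 t2 : Fin m, s1 ≠ s2 → t1 ≠ t2 →
    ∑ q, (betaW m c q s1 s2)^2 = ∑ q, (betaW m c q t1 t2)^2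

lemma sq_sub_one_add_sq_sub_half_le {a b x : ℝ} (hba : b ≤ a) (hx : x ∈ Set.Icc (0 : ℝ) 1) :
    (a - 1) ^ 2 + b ^ 2 - 1 / 2 ≤ (a - x) ^ 2 + (1 - x - b) ^ 2 := by
  nlinarith [hx.1, hx.2, sq_nonneg (x - 1 / 2), mul_nonneg (sub_nonneg.2 hba) (sub_nonneg.2 hx.2)]

lemma sq_sub_add_sq_le {a b x : ℝ} (hab : a ≤ b) (hx : x ∈ Set.Icc (0 : ℝ) 1) :
    (a - x) ^ 2 + (1 - x - b) ^ 2 ≤ (a - 1) ^ 2 + b ^ 2 := by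
  nlinarith [hx.1, hx.2, mul_nonneg hx.1 (sub_nonneg.2 hx.2),
    mul_nonneg (sub_nonneg.2 hab) (sub_nonneg.2 hx.2)]

lemma Finset.exists_ne_mul_le_sum_sub {ι : Type*} [Fintype ι] [DecidableEq ι] [Nontrivial ι]
    (f : ι → ℝ) (t : ι) : ∃ v ≠ t, (Fintype.card ι - 1 : ℝ) * f v ≤ ∑ i, f i - f t := by
  obtain ⟨v, hv, hmin⟩ := (univ.erase t).exists_min_image f
    ((exists_ne t).imp fun w hw => mem_erase.2 ⟨hw, mem_univ w⟩)
  refine ⟨v, ne_of_mem_erase hv, ?_⟩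
  have := (univ.erase t).card_nsmul_le_sum f (f v) hmin
  rwa [card_erase_of_mem (mem_univ t), card_univ, nsmul_eq_mul,
    Nat.cast_sub Fintype.card_pos, Nat.cast_one, sum_erase_eq_sub (mem_univ t)] at this

lemma Finset.exists_ne_sum_sub_le_mul {ι : Type*} [Fintype ι] [DecidableEq ι] [Nontrivial ι]
    (f : ι → ℝ) (s : ι) : ∃ u ≠ s, ∑ i, f i - f s ≤ (Fintype.card ι - 1 : ℝ) * f u := by
  obtain ⟨u, hu, h⟩ := exists_ne_mul_le_sum_sub (-f) s
  refine ⟨u, hu, ?_⟩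
  simp only [Pi.neg_apply, sum_neg_distrib] at h
  linarith

namespace IsWOMNI

variable {m : ℕ} {c : Fin m → Fin m → Fin m → ℝ}

lemma alphaW_of_ne (hc : IsWOMNI m c) {k q : Fin m} (h : q ≠ k) :
    alphaW m c k q = c q q k := by
  rw [alphaW, sum_eq_single q (fun ℓ _ hℓ => hc.2.1 q k ℓ h (Ne.symm hℓ))
    (fun hq => absurd (mem_univ q) hq)]
  exact hc.1 q k q

lemma mem_Icc (hc : IsWOMNI m c) {i j : Fin m} (h : i ≠ j) : c i i j ∈ Set.Icc (0 : ℝ) 1 :=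
  (hc.2.2.2.2 i j h).1

lemma one_le_alphaW_self (hc : IsWOMNI m c) (q : Fin m) : 1 ≤ alphaW m c q q := by
  calc (1 : ℝ) = c q q q := (hc.2.2.1 q).symm
    _ ≤ alphaW m c q q := single_le_sum (f := c q q) (fun ℓ _ => by
        rcases eq_or_ne q ℓ with rfl | h
        · rw [hc.2.2.1 q]; exact zero_le_one
        · exact (hc.mem_Icc h).1) (mem_univ q)

lemma add_swap_eq (hc : IsWOMNI m c) (q ℓ : Fin m) :
    c q q ℓ + c ℓ ℓ q = 1 + if q = ℓ then 1 else 0 := by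
  rcases eq_or_ne q ℓ with rfl | h
  · rw [hc.2.2.1 q, if_pos rfl]
  · rw [if_neg h, hc.1 ℓ ℓ q, (hc.2.2.2.2 q ℓ h).2, add_zero]

lemma sum_alphaW_self (hc : IsWOMNI m c) :
    ∑ q, alphaW m c q q = (m : ℝ) * (m + 1) / 2 := by
  have h : ∑ q, ∑ ℓ, (c q q ℓ + c ℓ ℓ q) = (m : ℝ) * (m + 1) := by
    simp only [hc.add_swap_eq, sum_add_distrib, sum_ite_eq, mem_univ, if_true, sum_const,
      card_univ, Fintype.card_fin, nsmul_eq_mul]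
    ring
  simp only [sum_add_distrib] at h
  rw [sum_comm (f := fun q ℓ => c ℓ ℓ q)] at h
  simp only [alphaW]
  linarith

lemma sum_sq_betaW_eq (hc : IsWOMNI m c) {i j : Fin m} (hij : i ≠ j) :
    ∑ q, betaW m c q i j ^ 2 =
      (alphaW m c i i - c i i j) ^ 2 + (1 - c i i j - alphaW m c j j) ^ 2 +
        ∑ q ∈ univ \ {i, j}, (c q q i - c q q j) ^ 2 := by
  rw [← sum_sdiff (subset_univ {i, j}), sum_pair hij, add_comm]
  congr 1
  · rw [betaW, betaW, hc.alphaW_of_ne hij, hc.alphaW_of_ne hij.symm, hc.1 j j i,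
      ← (hc.2.2.2.2 i j hij).2]
    ring
  · refine sum_congr rfl fun q hq => ?_
    simp only [mem_sdiff, mem_insert, mem_singleton, not_or] at hq
    rw [betaW, hc.alphaW_of_ne hq.2.1, hc.alphaW_of_ne hq.2.2]

lemma sum_sdiff_pair_le (hc : IsWOMNI m c) {i j : Fin m} (hij : i ≠ j) :
    ∑ q ∈ univ \ {i, j}, (c q q i - c q q j) ^ 2 ≤ (m : ℝ) - 2 := by
  have hterm : ∀ q ∈ univ \ {i, j}, (c q q i - c q q j) ^ 2 ≤ 1 := by
    intro q hq
    simp only [mem_sdiff, mem_insert, mem_singleton, not_or] at hq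
    have hi := hc.mem_Icc hq.2.1
    have hj := hc.mem_Icc hq.2.2
    nlinarith [hi.1, hi.2, hj.1, hj.2]
  have hcard : (#(univ \ {i, j}) : ℝ) = m - 2 := by
    rw [card_sdiff_of_subset (subset_univ _), card_univ, Fintype.card_fin, card_pair hij,
      Nat.cast_sub (by omega)]
    norm_num
  simpa [hcard] using sum_le_card_nsmul _ _ _ hterm

lemma sq_sub_one_add_sq_sub_half_le_sum_sq_betaW (hc : IsWOMNI m c) {i j : Fin m} (hij : i ≠ j)
    (hji : alphaW m c j j ≤ alphaW m c i i) :
    (alphaW m c i i - 1) ^ 2 + alphaW m c j j ^ 2 - 1 / 2 ≤ ∑ q, betaW m c q i j ^ 2 := by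
  rw [hc.sum_sq_betaW_eq hij]
  have := sq_sub_one_add_sq_sub_half_le hji (hc.mem_Icc hij)
  linarith [sum_nonneg fun q (_ : q ∈ univ \ {i, j}) => sq_nonneg (c q q i - c q q j)]

lemma sum_sq_betaW_le (hc : IsWOMNI m c) {i j : Fin m} (hij : i ≠ j)
    (hij' : alphaW m c i i ≤ alphaW m c j j) :
    ∑ q, betaW m c q i j ^ 2 ≤ (alphaW m c i i - 1) ^ 2 + alphaW m c j j ^ 2 + (m - 2) := by
  rw [hc.sum_sq_betaW_eq hij]
  linarith [sq_sub_add_sq_le hij' (hc.mem_Icc hij), hc.sum_sdiff_pair_le hij]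

lemma alphaW_self_max_le (hc : IsWOMNI m c) (hflat : InducesFlat m c) (hm : 2 ≤ m)
    {s t : Fin m} (hs : ∀ q, alphaW m c q q ≤ alphaW m c s s)
    (ht : ∀ q, alphaW m c t t ≤ alphaW m c q q) :
    alphaW m c s s ≤ ((m : ℝ) + 10) / 2 := by
  have : Nontrivial (Fin m) := Fin.nontrivial_iff_two_le.2 hm
  have hm2 : (2 : ℝ) ≤ m := by exact_mod_cast hm
  set a : Fin m → ℝ := fun q => alphaW m c q q
  have ha1 : ∀ q, 1 ≤ a q := hc.one_le_alphaW_self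
  obtain ⟨w, hws⟩ := exists_ne s
  obtain ⟨v, hvt, hv⟩ := exists_ne_mul_le_sum_sub a t
  rw [Fintype.card_fin, hc.sum_alphaW_self] at hv
  have hav : a v ≤ ((m : ℝ) + 2) / 2 := by nlinarith [ha1 t]
  have hlow := hc.sq_sub_one_add_sq_sub_half_le_sum_sq_betaW hws.symm (hs w)
  have hupp := hc.sum_sq_betaW_le hvt.symm (ht v)
  rw [hflat t v s w hvt.symm hws.symm] at hupp
  nlinarith [ha1 t, ha1 v, ht w, ht s]

lemma le_alphaW_self_min (hc : IsWOMNI m c) (hflat : InducesFlat m c) (hm : 11 ≤ m)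
    {s t : Fin m} (hs : ∀ q, alphaW m c q q ≤ alphaW m c s s)
    (ht : ∀ q, alphaW m c t t ≤ alphaW m c q q) :
    ((m : ℝ) - 8) / 2 ≤ alphaW m c t t := by
  have : Nontrivial (Fin m) := Fin.nontrivial_iff_two_le.2 (by omega)
  have hm11 : (11 : ℝ) ≤ m := by exact_mod_cast hm
  set a : Fin m → ℝ := fun q => alphaW m c q q
  have ha1 : ∀ q, 1 ≤ a q := hc.one_le_alphaW_self
  have hsmax := hc.alphaW_self_max_le hflat (by omega) hs ht
  obtain ⟨w, hwt⟩ := exists_ne t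
  obtain ⟨u, hus, hu⟩ := exists_ne_sum_sub_le_mul a s
  rw [Fintype.card_fin, hc.sum_alphaW_self] at hu
  have hau : (m : ℝ) / 2 ≤ a u := by nlinarith
  have hlow := hc.sq_sub_one_add_sq_sub_half_le_sum_sq_betaW hus.symm (hs u)
  have hupp := hc.sum_sq_betaW_le hwt.symm (ht w)
  rw [hflat s u t w hus.symm hwt.symm] at hlow
  by_contra hlt
  have hw : a w ^ 2 ≤ a s ^ 2 := pow_le_pow_left₀ (by linarith [ha1 w]) (hs w) 2
  have hu2 : ((m : ℝ) / 2) ^ 2 ≤ a u ^ 2 := pow_le_pow_left₀ (by positivity) hau 2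
  have ht2 : (a t - 1) ^ 2 < (((m : ℝ) - 10) / 2) ^ 2 :=
    pow_lt_pow_left₀ (by linarith) (by linarith [ha1 t]) two_ne_zero
  nlinarith

end IsWOMNI

theorem stmt_7 (m : ℕ) (hm : 3 ≤ m) (c : Fin m → Fin m → Fin m → ℝ)
    (hc : IsWOMNI m c) (hflat : InducesFlat m c)
    (M L : ℝ) (hM : IsGreatest (Set.range fun q : Fin m => alphaW m c q q) M)
    (hL : IsLeast (Set.range fun q : Fin m => alphaW m c q q) L) :
    L ≥ ((m : ℝ) - 8) / 2 ∧ M ≤ ((m : ℝ) + 10) / 2 := by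
  obtain ⟨⟨s, rfl⟩, hs⟩ := hM
  obtain ⟨⟨t, rfl⟩, ht⟩ := hL
  have hs : ∀ q, alphaW m c q q ≤ alphaW m c s s := fun q => hs ⟨q, rfl⟩
  have ht : ∀ q, alphaW m c t t ≤ alphaW m c q q := fun q => ht ⟨q, rfl⟩
  refine ⟨?_, hc.alphaW_self_max_le hflat (by omega) hs ht⟩
  rcases le_or_gt m 10 with hsmall | hbig
  · have : (m : ℝ) ≤ 10 := by exact_mod_cast hsmall
    linarith [hc.one_le_alphaW_self t]
  · exact hc.le_alphaW_self_min hflat hbig hs ht
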